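/- (Correctness of spectral WA extraction from a complete prefix-closed sub-block.) Let Σ be a finite alphabet and f : List Σ → ℝ a function with finite Hankel rank r. Let 𝒫, 𝒮 be finite sets of strings with 𝒫 prefix-closed, λ ∈ 𝒫, λ ∈ 𝒮, and suppose the sub-block H_B ∈ ℝ^{𝒫×𝒮}, H_B(u,v) = f(u ++ v), has rank exactly r. Let H_B = P·S be a rank factorization with P ∈ ℝ^{𝒫×r}, S ∈ ℝ^{r×𝒮}, and let P⁺ ∈ ℝ^{r×𝒫} and S⁺ ∈ ℝ^{𝒮×r} satisfy P⁺·P = I_r and S·S⁺ = I_r. For each σ ∈ Σ define H_σ ∈ ℝ^{𝒫×𝒮} by H_σ(u,v) = f(u ++ [σ] ++ v), let h_{𝒫,λ} ∈ ℝ^{𝒫} be the vector h_{𝒫,λ}(u) = f(u), and h_{λ,𝒮} ∈ ℝ^{𝒮} be the vector h_{λ,𝒮}(v) = f(v). Then the weighted automaton with r states given by α0ᵀ = h_{λ,𝒮}ᵀ · S⁺, M_σ = P⁺ · H_σ · S⁺ for each σ ∈ Σ, and α∞ = P⁺ · h_{𝒫,λ}, computes f: for every string w ∈ List Σ, α0ᵀ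 M_w α∞ = f(w). Since it has r states, it is a minimal WA computing f. -/

import Mathlib

/-!
Completeness of the sub-block makes the rows `f (p ++ ·)`, `p ∈ 𝒫`, span the whole Hankel row
space, and makes restriction to the columns `𝒮` injective on that space. So a combination
`∑ y p • f (p ++ ·)` is determined by `y ᵥ* H_B`. For the state
`β u = h_{u,𝒮} S⁺` this gives `(β u P⁺) ᵥ* H_B = h_{u,𝒮}`, hence `β u P⁺` are coefficients of the
full row `f (u ++ ·)` in the `𝒫`-rows. Evaluating that identity at `σ :: v` gives
`β u M_σ = β (u ++ [σ])`, and at `λ` gives `β u ⬝ α∞ = f u`.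
-/

open Matrix Module Submodule

theorem Submodule.eq_of_le_of_finrank_le_finrank_map {K M N : Type*} [Field K]
    [AddCommGroup M] [Module K M] [AddCommGroup N] [Module K N]
    {W V : Submodule K M} [FiniteDimensional K V] (L : M →ₗ[K] N) (hle : W ≤ V)
    (h : finrank K V ≤ finrank K (W.map L)) : W = V :=
  have : FiniteDimensional K W := finiteDimensional_of_le hle
  eq_of_le_of_finrank_le hle (h.trans (finrank_map_le L W))

section Hankel

variable {A K : Type*} [Field K] (f : List A → K)

def hankelRow (u : List A) : List A → K := fun v => f (u ++ v)

def hankelSpan : Submodule K (List A → K) := span K (Set.range (hankelRow f))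

def hankelBlock (P S : Finset (List A)) : Matrix P S K := of fun u v => f (u ++ v)

variable {f}

theorem hankelSpan_eq_span_setOf :
    hankelSpan f = span K {g | ∃ u : List A, g = fun v => f (u ++ v)} := by
  unfold hankelSpan
  congr 1
  ext g
  exact ⟨fun ⟨u, hu⟩ => ⟨u, hu.symm⟩, fun ⟨u, hu⟩ => ⟨u, hu.symm⟩⟩

variable {P S : Finset (List A)}

theorem map_funLeft_span_hankelRow :
    (span K (Set.range fun p : P => hankelRow f p)).map (LinearMap.funLeft K K ((↑) : S → _)) =
      span K (Set.range (hankelBlock f P S).row) := by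
  rw [map_span, ← Set.range_comp]
  rfl

theorem vecMul_hankelBlock (y : P → K) :
    y ᵥ* hankelBlock f P S = LinearMap.funLeft K K ((↑) : S → _) (∑ p, y p • hankelRow f p) := by
  ext v
  simp [vecMul, dotProduct, hankelBlock, hankelRow, LinearMap.funLeft, Finset.sum_apply]

theorem span_hankelRow_eq_hankelSpan
    (hc : Module.rank K (hankelSpan f) = (hankelBlock f P S).rank) :
    span K (Set.range fun p : P => hankelRow f p) = hankelSpan f := by
  have : FiniteDimensional K (hankelSpan f) := Module.finite_of_rank_eq_nat hc
  refine eq_of_le_of_finrank_le_finrank_map (LinearMap.funLeft K K ((↑) : S → List A))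
    (span_mono (Set.range_comp_subset_range ((↑) : P → List A) (hankelRow f))) ?_
  rw [map_funLeft_span_hankelRow, ← rank_eq_finrank_span_row, finrank_eq_of_rank_eq hc]

theorem disjoint_hankelSpan_ker_funLeft
    (hc : Module.rank K (hankelSpan f) = (hankelBlock f P S).rank) :
    Disjoint (hankelSpan f) (LinearMap.ker (LinearMap.funLeft K K ((↑) : S → List A))) := by
  have hV := span_hankelRow_eq_hankelSpan hc
  have : FiniteDimensional K (hankelSpan f) := Module.finite_of_rank_eq_nat hc
  refine disjoint_ker_of_finrank_le _ ?_
  rw [← hV, map_funLeft_span_hankelRow, ← rank_eq_finrank_span_row, hV,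
    finrank_eq_of_rank_eq hc]

theorem sum_smul_hankelRow_eq_zero
    (hc : Module.rank K (hankelSpan f) = (hankelBlock f P S).rank)
    {y : P → K} (hy : y ᵥ* hankelBlock f P S = 0) : ∑ p, y p • hankelRow f p = 0 := by
  refine LinearMap.disjoint_ker.mp (disjoint_hankelSpan_ker_funLeft hc) _ ?_ ?_
  · exact sum_mem fun p _ => smul_mem _ _ (subset_span ⟨p, rfl⟩)
  · rwa [← vecMul_hankelBlock]

theorem exists_sum_smul_hankelRow_eq
    (hc : Module.rank K (hankelSpan f) = (hankelBlock f P S).rank) (u : List A) :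
    ∃ c : P → K, ∑ p, c p • hankelRow f p = hankelRow f u := by
  rw [← mem_span_range_iff_exists_fun, span_hankelRow_eq_hankelSpan hc]
  exact subset_span ⟨u, rfl⟩

end Hankel

section Extraction

variable {A K n : Type*} [Field K] [Fintype n] {f : List A → K}
  {P S : Finset (List A)}

variable (f) in
def prefixState (Sp : Matrix S n K) (u : List A) : n → K := (fun v : S => f (u ++ v)) ᵥ* Sp

variable {Pm : Matrix P n K} {Sm : Matrix n S K} {Pp : Matrix n P K} {Sp : Matrix S n K}

theorem sum_smul_hankelRow_prefixState [DecidableEq n]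
    (hc : Module.rank K (hankelSpan f) = (hankelBlock f P S).rank)
    (hfact : hankelBlock f P S = Pm * Sm) (hPp : Pp * Pm = 1) (hSp : Sm * Sp = 1) (u : List A) :
    ∑ p, (prefixState f Sp u ᵥ* Pp) p • hankelRow f p = hankelRow f u := by
  obtain ⟨c, hcu⟩ := exists_sum_smul_hankelRow_eq hc u
  have hrow : (fun v : S => f (u ++ v)) = c ᵥ* hankelBlock f P S := by
    rw [vecMul_hankelBlock, hcu]
    rfl
  have hstate : prefixState f Sp u = c ᵥ* Pm := by
    rw [prefixState, hrow, hfact, vecMul_vecMul, Matrix.mul_assoc, hSp, Matrix.mul_one]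
  have hker : (prefixState f Sp u ᵥ* Pp - c) ᵥ* hankelBlock f P S = 0 := by
    rw [sub_vecMul, hstate, hfact, vecMul_vecMul, vecMul_vecMul, ← Matrix.mul_assoc Pp, hPp,
      Matrix.one_mul, sub_self]
  have := sum_smul_hankelRow_eq_zero hc hker
  simp only [Pi.sub_apply, sub_smul, Finset.sum_sub_distrib, sub_eq_zero, hcu] at this
  exact this

theorem prefixState_vecMul_transition
    (hdecode : ∀ u, ∑ p, (prefixState f Sp u ᵥ* Pp) p • hankelRow f p = hankelRow f u)
    (u : List A) (σ : A) :
    prefixState f Sp u ᵥ* (Pp * of (fun (p : P) (v : S) => f (↑p ++ [σ] ++ ↑v)) * Sp) =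
      prefixState f Sp (u ++ [σ]) := by
  rw [← vecMul_vecMul, ← vecMul_vecMul]
  show _ = (fun v : S => f (u ++ [σ] ++ v)) ᵥ* Sp
  congr 1
  ext v
  have := congrFun (hdecode u) ([σ] ++ v)
  simpa [vecMul, dotProduct, hankelRow, Finset.sum_apply, List.append_assoc] using this

theorem prefixState_vecMul_prod [DecidableEq n]
    (hdecode : ∀ u, ∑ p, (prefixState f Sp u ᵥ* Pp) p • hankelRow f p = hankelRow f u)
    (u w : List A) :
    prefixState f Sp u ᵥ*
        (w.map fun σ : A => Pp * of (fun (p : P) (v : S) => f (↑p ++ [σ] ++ ↑v)) * Sp).prod =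
      prefixState f Sp (u ++ w) := by
  induction w generalizing u with
  | nil => simp
  | cons σ w ih =>
    rw [List.map_cons, List.prod_cons, ← vecMul_vecMul,
      prefixState_vecMul_transition hdecode, ih, List.append_assoc, List.singleton_append]

theorem prefixState_dotProduct_mulVec
    (hdecode : ∀ u, ∑ p, (prefixState f Sp u ᵥ* Pp) p • hankelRow f p = hankelRow f u)
    (u : List A) :
    prefixState f Sp u ⬝ᵥ Pp *ᵥ (fun p : P => f p) = f u := by
  have := congrFun (hdecode u) []
  simp only [Finset.sum_apply, Pi.smul_apply, smul_eq_mul, hankelRow, List.append_nil] at this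
  rwa [dotProduct_mulVec, dotProduct]

end Extraction

theorem spectral_extraction_correct_general {A : Type*}
    (f : List A → ℝ) (r : ℕ)
    (hr : Module.rank ℝ
        ↥(Submodule.span ℝ
            {g : List A → ℝ | ∃ u : List A, g = fun v : List A => f (u ++ v)}) = r)
    (P S : Finset (List A))
    (hrank : (Matrix.of fun (u : ↥P) (v : ↥S) => f (↑u ++ ↑v)).rank = r)
    (Pm : Matrix ↥P (Fin r) ℝ) (Sm : Matrix (Fin r) ↥S ℝ)
    (hfact : (Matrix.of fun (u : ↥P) (v : ↥S) => f (↑u ++ ↑v)) = Pm * Sm)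
    (Pp : Matrix (Fin r) ↥P ℝ) (Sp : Matrix ↥S (Fin r) ℝ)
    (hPp : Pp * Pm = 1) (hSp : Sm * Sp = 1) :
    ∀ w : List A,
      Matrix.vecMul (Matrix.vecMul (fun v : ↥S => f ↑v) Sp)
          ((w.map fun σ : A =>
              Pp * (Matrix.of fun (u : ↥P) (v : ↥S) => f (↑u ++ [σ] ++ ↑v)) * Sp).prod)
        ⬝ᵥ Pp.mulVec (fun u : ↥P => f ↑u) = f w := by
  have hc : Module.rank ℝ (hankelSpan f) = (hankelBlock f P S).rank := by
    rw [hankelSpan_eq_span_setOf, hr]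
    exact congrArg Nat.cast hrank.symm
  have hdecode := sum_smul_hankelRow_prefixState hc hfact hPp hSp
  intro w
  have hinit : (fun v : S => f v) ᵥ* Sp = prefixState f Sp [] := rfl
  rw [hinit, prefixState_vecMul_prod hdecode,
    prefixState_dotProduct_mulVec hdecode, List.nil_append]

/-- correctness of spectral WA extraction from a complete prefix-closed
sub-block: given `f` of finite Hankel rank `r`, a prefix-closed set `P` and a set `S` of
strings, both containing the empty string, such that the sub-block `H_B` has rank exactly
`r`, a rank factorization `H_B = Pm * Sm` and one-sided pseudo-inverses `Pp, Sp` with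
`Pp * Pm = 1` and `Sm * Sp = 1`, the weighted automaton with `r` states defined by
`α0ᵀ = h_{λ,S}ᵀ Sp`, `M σ = Pp * H_σ * Sp`, `α∞ = Pp * h_{P,λ}` computes `f`. -/
theorem spectral_extraction_correct {A : Type*} [Fintype A]
    (f : List A → ℝ) (r : ℕ)
    (hr : Module.rank ℝ
        ↥(Submodule.span ℝ
            {g : List A → ℝ | ∃ u : List A, g = fun v : List A => f (u ++ v)}) = r)
    (P S : Finset (List A))
    (hpc : ∀ w ∈ P, ∀ u : List A, u <+: w → u ∈ P)
    (hlamP : ([] : List A) ∈ P) (hlamS : ([] : List A) ∈ S)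
    (hrank : (Matrix.of fun (u : ↥P) (v : ↥S) => f (↑u ++ ↑v)).rank = r)
    (Pm : Matrix ↥P (Fin r) ℝ) (Sm : Matrix (Fin r) ↥S ℝ)
    (hfact : (Matrix.of fun (u : ↥P) (v : ↥S) => f (↑u ++ ↑v)) = Pm * Sm)
    (Pp : Matrix (Fin r) ↥P ℝ) (Sp : Matrix ↥S (Fin r) ℝ)
    (hPp : Pp * Pm = 1) (hSp : Sm * Sp = 1) :
    ∀ w : List A,
      Matrix.vecMul (Matrix.vecMul (fun v : ↥S => f ↑v) Sp)
          ((w.map fun σ : A =>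
              Pp * (Matrix.of fun (u : ↥P) (v : ↥S) => f (↑u ++ [σ] ++ ↑v)) * Sp).prod)
        ⬝ᵥ Pp.mulVec (fun u : ↥P => f ↑u) = f w :=
  spectral_extraction_correct_general f r hr P S hrank Pm Sm hfact Pp Sp hPp hSp
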